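/- For every s > 0 and every x ∈ ℝ², the normalized self-convolution of the indicator function of the disc of radius s/2 equals the Euclid's hat: (4/(π s²)) · ∫_{ℝ²} 𝟙_{B(0, s/2)}(x − y) · 𝟙_{B(0, s/2)}(y) dy = h(|x|/s), where 𝟙_{B(0, r)} is the indicator function of the closed Euclidean ball of radius r centered at the origin of ℝ². -/

import Mathlib

/-!
Substituting `y ↦ x - y` turns the convolution into the area of the lens `B(x, r) ∩ B(0, r)`,
`r = s / 2`. A reflection moves `x` to `(‖x‖, 0)`, and Fubini writes the area as the integral of
the vertical chord lengths of the lens. The lens is symmetric about the abscissa `‖x‖ / 2`, so its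
area is twice that of the circular segment `∫_{‖x‖/2}^r 2√(r² - t²) dt`, which the substitution
`t = r sin θ` evaluates in terms of `arccos`.
-/

open Real MeasureTheory

/-- The two-dimensional Euclid's hat function:
`h w = (2/π)(arccos w − w√(1−w²))` for `0 ≤ w ≤ 1` and `h w = 0` for `w > 1`. -/
noncomputable def euclidHat (w : ℝ) : ℝ :=
  if w ≤ 1 then (2 / π) * (Real.arccos w - w * Real.sqrt (1 - w ^ 2)) else 0

open Metric Set

theorem integral_indicator_closedBall_sub_mul_indicator_closedBall {E : Type*}
    [SeminormedAddCommGroup E] [MeasurableSpace E] [OpensMeasurableSpace E]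
    (μ : Measure E) (x : E) (r : ℝ) :
    ∫ y, (closedBall 0 r).indicator (fun _ => (1 : ℝ)) (x - y) *
        (closedBall 0 r).indicator (fun _ => (1 : ℝ)) y ∂μ =
      μ.real (closedBall x r ∩ closedBall 0 r) := by
  have hball : ∀ y, (closedBall (0 : E) r).indicator (fun _ => (1 : ℝ)) (x - y) =
      (closedBall x r).indicator (fun _ => 1) y := fun y => by
    simp only [indicator, mem_closedBall, dist_eq_norm, sub_zero, norm_sub_rev]
  simp_rw [hball, ← inter_indicator_mul, mul_one]
  exact integral_indicator_one (isClosed_closedBall.measurableSet.inter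
    isClosed_closedBall.measurableSet)

theorem volume_closedBall_inter_closedBall_zero_eq_of_norm_eq {E : Type*}
    [NormedAddCommGroup E] [InnerProductSpace ℝ E] [FiniteDimensional ℝ E]
    [MeasurableSpace E] [BorelSpace E] {x v : E} (h : ‖x‖ = ‖v‖) (r : ℝ) :
    volume (closedBall x r ∩ closedBall 0 r) = volume (closedBall v r ∩ closedBall 0 r) := by
  set f := Submodule.reflection (ℝ ∙ (x - v))ᗮ
  have hpre : f ⁻¹' (closedBall v r ∩ closedBall 0 r) = closedBall x r ∩ closedBall 0 r := by
    rw [preimage_inter, f.preimage_closedBall, f.preimage_closedBall, map_zero,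
      ← Submodule.reflection_sub h, Submodule.reflection_symm, Submodule.reflection_reflection]
  rw [← hpre, f.measurePreserving.measure_preimage
    (isClosed_closedBall.measurableSet.inter isClosed_closedBall.measurableSet).nullMeasurableSet]

theorem volume_setOf_sq_le (c : ℝ) : volume {u : ℝ | u ^ 2 ≤ c} = ENNReal.ofReal (2 * √c) := by
  rcases le_or_gt 0 c with hc | hc
  · have : {u : ℝ | u ^ 2 ≤ c} = Icc (-√c) √c := by ext u; exact Real.sq_le hc
    rw [this, volume_Icc, sub_neg_eq_add, two_mul]
  · have : {u : ℝ | u ^ 2 ≤ c} = ∅ :=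
      eq_empty_of_forall_notMem fun u hu => (hc.trans_le (sq_nonneg u)).not_ge hu
    rw [this, measure_empty, sqrt_eq_zero_of_nonpos hc.le, mul_zero, ENNReal.ofReal_zero]

theorem volume_setOf_snd_sq_le {g : ℝ → ℝ} (hg : Measurable g) :
    volume {p : ℝ × ℝ | p.2 ^ 2 ≤ g p.1} = ∫⁻ t, ENNReal.ofReal (2 * √(g t)) := by
  rw [Measure.volume_eq_prod, Measure.prod_apply (measurableSet_le (by fun_prop) (by fun_prop))]
  exact lintegral_congr fun t => volume_setOf_sq_le (g t)

theorem integral_two_mul_sqrt_sq_sub_sq {r a : ℝ} (hr : 0 < r) (ha : -r ≤ a) (har : a ≤ r) :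
    ∫ t in a..r, 2 * √(r ^ 2 - t ^ 2) =
      r ^ 2 * (arccos (a / r) - a / r * √(1 - (a / r) ^ 2)) := by
  have hw : -1 ≤ a / r ∧ a / r ≤ 1 := by
    constructor
    · rwa [le_div_iff₀ hr, neg_one_mul]
    · rwa [div_le_one hr]
  set α := arcsin (a / r)
  have hα : α ≤ π / 2 := arcsin_le_pi_div_two _
  calc ∫ t in a..r, 2 * √(r ^ 2 - t ^ 2)
      = ∫ t in r * sin α..r * sin (π / 2), 2 * √(r ^ 2 - t ^ 2) := by
        rw [sin_arcsin hw.1 hw.2, sin_pi_div_two, mul_div_cancel₀ _ hr.ne', mul_one]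
    _ = ∫ θ in α..π / 2, 2 * √(r ^ 2 - (r * sin θ) ^ 2) * (r * cos θ) :=
        (intervalIntegral.integral_comp_mul_deriv (g := fun t => 2 * √(r ^ 2 - t ^ 2))
          (fun θ _ => (hasDerivAt_sin θ).const_mul r) (by fun_prop) (by fun_prop)).symm
    _ = ∫ θ in α..π / 2, 2 * r ^ 2 * cos θ ^ 2 := by
        refine intervalIntegral.integral_congr fun θ hθ => ?_
        rw [uIcc_of_le hα] at hθ
        have hcos : 0 ≤ r * cos θ :=
          mul_nonneg hr.le (cos_nonneg_of_mem_Icc ⟨(neg_pi_div_two_le_arcsin _).trans hθ.1, hθ.2⟩)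
        have : r ^ 2 - (r * sin θ) ^ 2 = (r * cos θ) ^ 2 := by
          linear_combination (-r ^ 2) * cos_sq_add_sin_sq θ
        simp only [this, sqrt_sq hcos]
        ring
    _ = r ^ 2 * (arccos (a / r) - a / r * √(1 - (a / r) ^ 2)) := by
        rw [intervalIntegral.integral_const_mul, integral_cos_sq, cos_pi_div_two,
          sin_arcsin hw.1 hw.2, cos_arcsin, arccos]
        ring

/-- Length of the vertical chord at abscissa `t` through the lens cut out by the discs of radius
`r` centred at `(0, 0)` and `(d, 0)`; off the lens the `min` is negative and `√` returns `0`. -/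
noncomputable def lensChord (r d t : ℝ) : ℝ := 2 * √(min (r ^ 2 - t ^ 2) (r ^ 2 - (t - d) ^ 2))

section lensChord

variable (r d : ℝ)

theorem continuous_lensChord : Continuous (lensChord r d) := by
  unfold lensChord; fun_prop

theorem lensChord_nonneg (t : ℝ) : 0 ≤ lensChord r d t := by
  unfold lensChord; positivity

theorem lensChord_sub (t : ℝ) : lensChord r d (d - t) = lensChord r d t := by
  rw [lensChord, lensChord, sub_sub_cancel_left, neg_sq, ← neg_sq (t - d), neg_sub, min_comm]

end lensChord

theorem lensChord_of_half_le (r : ℝ) {d t : ℝ} (hd : 0 ≤ d) (ht : d / 2 ≤ t) :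
    lensChord r d t = 2 * √(r ^ 2 - t ^ 2) := by
  rw [lensChord, min_eq_left (by nlinarith)]

theorem support_lensChord_subset {r : ℝ} (hr : 0 ≤ r) (d : ℝ) :
    Function.support (lensChord r d) ⊆ Ioo (d - r) r := by
  intro t ht
  have hpos : 0 < min (r ^ 2 - t ^ 2) (r ^ 2 - (t - d) ^ 2) := by
    by_contra! h
    exact ht (by rw [lensChord, sqrt_eq_zero_of_nonpos h, mul_zero])
  rw [lt_min_iff] at hpos
  constructor <;> nlinarith

theorem integrable_lensChord {r : ℝ} (hr : 0 ≤ r) (d : ℝ) : Integrable (lensChord r d) :=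
  (continuous_lensChord r d).integrable_of_hasCompactSupport <|
    HasCompactSupport.of_support_subset_isCompact isCompact_Icc
      ((support_lensChord_subset hr d).trans Ioo_subset_Icc_self)

theorem integral_lensChord {r d : ℝ} (hr : 0 < r) (hd : 0 ≤ d) (hdr : d ≤ 2 * r) :
    ∫ t, lensChord r d t =
      2 * (r ^ 2 * (arccos (d / (2 * r)) - d / (2 * r) * √(1 - (d / (2 * r)) ^ 2))) := by
  have hint : ∀ a b : ℝ, IntervalIntegrable (lensChord r d) volume a b :=
    (continuous_lensChord r d).intervalIntegrable
  have hreflect :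
      ∫ t in (d - r)..(d / 2), lensChord r d t = ∫ t in (d / 2)..r, lensChord r d t := by
    have := intervalIntegral.integral_comp_sub_left (a := d / 2) (b := r) (lensChord r d) d
    simp only [lensChord_sub, sub_half] at this
    exact this.symm
  have hdr' : d / 2 ≤ r := by linarith
  have hhalf : ∫ t in (d / 2)..r, lensChord r d t = ∫ t in (d / 2)..r, 2 * √(r ^ 2 - t ^ 2) :=
    intervalIntegral.integral_congr fun t ht =>
      lensChord_of_half_le r hd (uIcc_of_le hdr' ▸ ht).1
  have hw : d / (2 * r) = d / 2 / r := by ring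
  rw [← intervalIntegral.integral_eq_integral_of_support_subset
      ((support_lensChord_subset hr.le d).trans Ioo_subset_Ioc_self),
    ← intervalIntegral.integral_add_adjacent_intervals (hint _ (d / 2)) (hint _ _), hreflect,
    hhalf, integral_two_mul_sqrt_sq_sub_sq hr (by linarith) hdr', hw]
  ring

theorem volume_closedBall_inter_closedBall_zero_eq_lintegral_lensChord {r : ℝ} (hr : 0 ≤ r)
    (d : ℝ) :
    volume (closedBall !₂[d, 0] r ∩ closedBall (0 : EuclideanSpace ℝ (Fin 2)) r) =
      ∫⁻ t, ENNReal.ofReal (lensChord r d t) := by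
  have hφ : MeasurePreserving (fun y : EuclideanSpace ℝ (Fin 2) => (y 0, y 1)) :=
    (volume_preserving_finTwoArrow ℝ).comp (PiLp.volume_preserving_ofLp (Fin 2))
  have hmem : ∀ c y : EuclideanSpace ℝ (Fin 2),
      y ∈ closedBall c r ↔ (y 0 - c 0) ^ 2 + (y 1 - c 1) ^ 2 ≤ r ^ 2 := fun c y => by
    rw [mem_closedBall, EuclideanSpace.dist_eq, sqrt_le_left hr, Fin.sum_univ_two, Real.dist_eq,
      Real.dist_eq, sq_abs, sq_abs]
  have hpre : (fun y : EuclideanSpace ℝ (Fin 2) => (y 0, y 1)) ⁻¹'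
      {p : ℝ × ℝ | p.2 ^ 2 ≤ min (r ^ 2 - p.1 ^ 2) (r ^ 2 - (p.1 - d) ^ 2)} =
        closedBall !₂[d, 0] r ∩ closedBall 0 r := by
    ext y
    simp only [mem_preimage, mem_ofPred_eq, le_min_iff, mem_inter_iff, hmem, Fin.isValue,
      Matrix.cons_val_zero, Matrix.cons_val_one, Matrix.cons_val_fin_one, sub_zero,
      PiLp.zero_apply]
    constructor <;> rintro ⟨h1, h2⟩ <;> constructor <;> linarith
  rw [← hpre,
    hφ.measure_preimage (measurableSet_le (by fun_prop) (by fun_prop)).nullMeasurableSet,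
    volume_setOf_snd_sq_le (g := fun t => min (r ^ 2 - t ^ 2) (r ^ 2 - (t - d) ^ 2))
      (by fun_prop)]
  rfl

theorem volume_real_closedBall_inter_closedBall_zero {r : ℝ} (hr : 0 < r)
    {x : EuclideanSpace ℝ (Fin 2)} (hx : ‖x‖ ≤ 2 * r) :
    volume.real (closedBall x r ∩ closedBall 0 r) =
      2 * (r ^ 2 * (arccos (‖x‖ / (2 * r)) - ‖x‖ / (2 * r) * √(1 - (‖x‖ / (2 * r)) ^ 2))) := by
  rw [measureReal_def, volume_closedBall_inter_closedBall_zero_eq_of_norm_eq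
      (v := !₂[‖x‖, 0]) (by simp [EuclideanSpace.norm_eq]) r,
    volume_closedBall_inter_closedBall_zero_eq_lintegral_lensChord hr.le,
    ← ofReal_integral_eq_lintegral_ofReal (integrable_lensChord hr.le _)
      (ae_of_all _ (lensChord_nonneg r _)),
    ENNReal.toReal_ofReal (integral_nonneg (lensChord_nonneg r _)),
    integral_lensChord hr (norm_nonneg x) hx]

theorem euclidHat_eq_normalized_self_convolution
    (s : ℝ) (hs : 0 < s) (x : EuclideanSpace ℝ (Fin 2)) :
    (4 / (π * s ^ 2)) *
        ∫ y : EuclideanSpace ℝ (Fin 2),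
          Set.indicator (Metric.closedBall (0 : EuclideanSpace ℝ (Fin 2)) (s / 2))
              (fun _ => (1 : ℝ)) (x - y) *
            Set.indicator (Metric.closedBall (0 : EuclideanSpace ℝ (Fin 2)) (s / 2))
              (fun _ => (1 : ℝ)) y
      = euclidHat (‖x‖ / s) := by
  have hr : 0 < s / 2 := by positivity
  have h2r : 2 * (s / 2) = s := by ring
  rw [integral_indicator_closedBall_sub_mul_indicator_closedBall, euclidHat]
  split_ifs with hxs
  · rw [volume_real_closedBall_inter_closedBall_zero hr (by rwa [h2r, ← div_le_one hs]), h2r]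
    field_simp
    ring
  · have hdisj : Disjoint (closedBall x (s / 2)) (closedBall 0 (s / 2)) :=
      closedBall_disjoint_closedBall <| by
        rw [dist_zero_right, add_halves]; exact (one_lt_div hs).mp (not_le.mp hxs)
    rw [hdisj.inter_eq, measureReal_empty, mul_zero]
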